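/- Fix k ∈ ℤ and let a : ℕ × ℕ → ℚ(q) satisfy the initial condition a_{0, m} = 1 / ([m+1]_q)^k for all m ≥ 0 and the recurrence a_{n+1, m} = [m]_q · a_{n, m} − [m+1]_q · a_{n, m+1} for all n, m ≥ 0. Then for every n ≥ 0, a_{n, 0} = (−1)^n · p_{n,k}(q), where p_{n,k}(q) := (−1)^n ∑_{m=0}^{n} (−1)^m · [m]!_q · {n brace m}_q / ([m+1]_q)^k is the q-poly-Bernoulli number; equivalently, a_{n, 0} = ∑_{m=0}^{n} (−1)^m [m]!_q {n brace m}_q / ([m+1]_q)^k. -/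

import Mathlib

open Finset

/-- The q-integer `[n]_q = 1 + q + ⋯ + q^(n-1)`. -/
def qInt {R : Type*} [CommSemiring R] (q : R) (n : ℕ) : R :=
  ∑ i ∈ Finset.range n, q ^ i

/-- The q-factorial `[n]!_q = [1]_q [2]_q ⋯ [n]_q`. -/
def qFact {R : Type*} [CommSemiring R] (q : R) (n : ℕ) : R :=
  ∏ i ∈ Finset.range n, qInt q (i + 1)

/-- The Carlitz q-Stirling numbers of the second kind. -/
def qStirling {R : Type*} [CommSemiring R] (q : R) : ℕ → ℕ → R
  | 0, 0 => 1
  | 0, _ + 1 => 0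
  | _ + 1, 0 => 0
  | n + 1, m + 1 => qStirling q n m + qInt q (m + 1) * qStirling q n (m + 1)

/-!
One step of the algorithm is a linear map on rows, and running `n + 1` steps from the row `a₀`
is running `n` steps from the row `a₁`. So, by induction on `n` over all tables at once,
`a_{n,0} = ∑ⱼ c_{n,j} a_{0,j}` for coefficients independent of the initial row. Summation by
parts shows that one more step changes them by `c_{n+1,j} = [j]_q (c_{n,j} - c_{n,j-1})`, which
for `c_{n,j} = (-1)^j [j]!_q {n brace j}_q` is exactly the q-Stirling recurrence.
-/

section CommSemiring

variable {R : Type*} [CommSemiring R] (q : R)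

@[simp]
lemma qInt_zero : qInt q 0 = 0 := by
  simp [qInt]

lemma qFact_succ (j : ℕ) : qFact q (j + 1) = qFact q j * qInt q (j + 1) :=
  prod_range_succ _ _

@[simp]
lemma qStirling_succ_zero (n : ℕ) : qStirling q (n + 1) 0 = 0 := rfl

lemma qStirling_succ_succ (n j : ℕ) :
    qStirling q (n + 1) (j + 1) = qStirling q n j + qInt q (j + 1) * qStirling q n (j + 1) :=
  rfl

lemma qStirling_eq_zero_of_lt {n j : ℕ} (h : n < j) : qStirling q n j = 0 := by
  induction n generalizing j with
  | zero => obtain ⟨j, rfl⟩ := Nat.exists_eq_succ_of_ne_zero (by omega : j ≠ 0); rfl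
  | succ n ih =>
    obtain ⟨j, rfl⟩ := Nat.exists_eq_succ_of_ne_zero (by omega : j ≠ 0)
    rw [qStirling_succ_succ, ih (by omega), ih (by omega), mul_zero, add_zero]

end CommSemiring

section CommRing

variable {R : Type*} [CommRing R] (q : R)

/-- The coefficient of `a_{0,j}` in `a_{n,0}`. -/
def qATCoeff (n j : ℕ) : R :=
  (-1) ^ j * qFact q j * qStirling q n j

@[simp]
lemma qATCoeff_succ_zero (n : ℕ) : qATCoeff q (n + 1) 0 = 0 := by
  simp [qATCoeff]

lemma qATCoeff_succ_succ (n j : ℕ) :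
    qATCoeff q (n + 1) (j + 1) = qInt q (j + 1) * (qATCoeff q n (j + 1) - qATCoeff q n j) := by
  simp only [qATCoeff, qStirling_succ_succ, qFact_succ, pow_succ]
  ring

lemma qATCoeff_eq_zero_of_lt {n j : ℕ} (h : n < j) : qATCoeff q n j = 0 := by
  simp [qATCoeff, qStirling_eq_zero_of_lt q h]

lemma sum_range_comp_succ_of_eq_zero {M : Type*} [AddCommMonoid M] (g : ℕ → M) {N : ℕ}
    (h0 : g 0 = 0) (hN : g N = 0) : ∑ j ∈ range N, g (j + 1) = ∑ j ∈ range N, g j := by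
  have h := (sum_range_succ' g N).symm.trans (sum_range_succ g N)
  rwa [h0, hN, add_zero, add_zero] at h

lemma sum_qATCoeff_mul_step (f : ℕ → R) (n : ℕ) :
    ∑ j ∈ range (n + 1), qATCoeff q n j * (qInt q j * f j - qInt q (j + 1) * f (j + 1))
      = ∑ j ∈ range (n + 2), qATCoeff q (n + 1) j * f j := by
  have hshift := sum_range_comp_succ_of_eq_zero (fun j ↦ qInt q j * qATCoeff q n j * f j)
    (N := n + 1) (by simp) (by simp [qATCoeff_eq_zero_of_lt q (Nat.lt_succ_self n)])
  calc _ = ∑ j ∈ range (n + 1), qInt q j * qATCoeff q n j * f j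
          - ∑ j ∈ range (n + 1), qInt q (j + 1) * qATCoeff q n j * f (j + 1) := by
        rw [← sum_sub_distrib]
        exact sum_congr rfl fun j _ ↦ by ring
    _ = ∑ j ∈ range (n + 1), qATCoeff q (n + 1) (j + 1) * f (j + 1) := by
        rw [← hshift, ← sum_sub_distrib]
        exact sum_congr rfl fun j _ ↦ by rw [qATCoeff_succ_succ]; ring
    _ = _ := by simp [sum_range_succ' _ (n + 1)]

theorem qAkiyamaTanigawa_eq_sum (a : ℕ → ℕ → R)
    (hrec : ∀ n m, a (n + 1) m = qInt q m * a n m - qInt q (m + 1) * a n (m + 1)) (n : ℕ) :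
    a n 0 = ∑ j ∈ range (n + 1), qATCoeff q n j * a 0 j := by
  induction n generalizing a with
  | zero => simp [qATCoeff, qFact, qStirling]
  | succ n ih =>
    rw [ih (fun n m ↦ a (n + 1) m) (fun n m ↦ hrec (n + 1) m)]
    simp only [hrec 0, sum_qATCoeff_mul_step]

end CommRing

theorem qAkiyamaTanigawa_polyBernoulli (k : ℤ) (a : ℕ → ℕ → RatFunc ℚ)
    (h0 : ∀ m : ℕ, a 0 m = (qInt (RatFunc.X : RatFunc ℚ) (m + 1) ^ k)⁻¹)
    (hrec : ∀ n m : ℕ,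
      a (n + 1) m = qInt (RatFunc.X : RatFunc ℚ) m * a n m
        - qInt (RatFunc.X : RatFunc ℚ) (m + 1) * a n (m + 1)) :
    ∀ n : ℕ, a n 0
      = ∑ m ∈ Finset.range (n + 1),
          (-1 : RatFunc ℚ) ^ m * qFact (RatFunc.X : RatFunc ℚ) m *
            qStirling (RatFunc.X : RatFunc ℚ) n m /
              qInt (RatFunc.X : RatFunc ℚ) (m + 1) ^ k := by
  intro n
  rw [qAkiyamaTanigawa_eq_sum _ a hrec n]
  simp only [qATCoeff, h0, div_eq_mul_inv]
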